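/- arXiv:2311.01874 — 2 statements merged into one kernel-verified Lean document; each statement's English description precedes it below -/
import Mathlib

section
/- Let E be a finite-dimensional vector space over a field, F_• an exhaustive increasing filtration of E indexed by ℤ (F_k = 0 for k ≪ 0, F_k = E for k ≫ 0) and G^• an exhaustive decreasing filtration (G^k = E for k ≪ 0, G^k = 0 for k ≫ 0). Then the following are equivalent: (i) for every k ∈ ℤ, E = F_k E ⊕ G^{k+1} E; (ii) E = ⊕_{k∈ℤ} (F_k E ∩ G^k E), and moreover F_j E = ⊕_{k ≤ j} (F_k E ∩ G^k E) and G^j E = ⊕_{k ≥ j} (F_k E ∩ G^k E) for all j. -/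
/-!
Everything happens in the modular lattice of subspaces. If `E = F_{j-1} ⊕ G^j`, the modular law
gives `F_j = F_{j-1} ⊔ (F_j ∩ G^j)`, and telescoping from `F_k = 0` yields
`F_j = ⨆_{k ≤ j} (F_k ∩ G^k)`; dually for `G`. The piece `F_j ∩ G^j` meets
`F_{j-1} ⊔ G^{j+1}`, which contains all other pieces, only in `0`, again by the modular law.
Conversely, independence of the pieces separates `F_k = ⨆_{i ≤ k}` from `G^{k+1} = ⨆_{i > k}`,
and every piece lies in one of them.
-/

section Lattice

variable {α : Type*} [CompleteLattice α]

theorem IsCompl.sup_inf_eq_of_le [IsModularLattice α] {a b c : α} (h : IsCompl a c) (hab : a ≤ b) :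
    a ⊔ c ⊓ b = b := by
  rw [← sup_inf_assoc_of_le c hab, h.sup_eq_top, top_inf_eq]

theorem disjoint_inf_sup_of_le [IsModularLattice α] {a b a' b' : α} (ha : a' ≤ a)
    (h₁ : Disjoint a' b) (h₂ : Disjoint a b') : Disjoint (a ⊓ b) (a' ⊔ b') := by
  rw [disjoint_iff]
  calc a ⊓ b ⊓ (a' ⊔ b') = b ⊓ (a' ⊔ b' ⊓ a) := by
        rw [← sup_inf_assoc_of_le b' ha]; ac_rfl
    _ = ⊥ := by rw [h₂.symm.eq_bot, sup_bot_eq, inf_comm, h₁.eq_bot]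

theorem eq_iSup_le_of_eq_pred_sup {f w : ℤ → α} (hf : Monotone f) (hbot : ∃ N, ∀ k ≤ N, f k = ⊥)
    (hstep : ∀ j, f j = f (j - 1) ⊔ w j) (j : ℤ) : f j = ⨆ k ≤ j, w k := by
  refine le_antisymm ?_ (iSup₂_le fun k hk => (le_sup_right.trans (hstep k).ge).trans (hf hk))
  obtain ⟨N, hN⟩ := hbot
  rcases le_or_gt j N with hj | hj
  · exact (hN j hj).trans_le bot_le
  replace hj := hj.le
  induction j, hj using Int.leInduction with
  | base => exact (hN N le_rfl).trans_le bot_le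
  | succ j _ ih =>
    rw [hstep, add_sub_cancel_right]
    exact sup_le (ih.trans (biSup_mono fun k hk => by omega)) (le_iSup₂_of_le (j + 1) le_rfl le_rfl)

theorem eq_iSup_ge_of_eq_sup_succ {f w : ℤ → α} (hf : Antitone f) (hbot : ∃ N, ∀ k ≥ N, f k = ⊥)
    (hstep : ∀ j, f j = w j ⊔ f (j + 1)) (j : ℤ) : f j = ⨆ k ≥ j, w k := by
  obtain ⟨N, hN⟩ := hbot
  have := eq_iSup_le_of_eq_pred_sup (f := fun j => f (-j)) (w := fun j => w (-j))
    (hf.comp fun _ _ h => neg_le_neg h) ⟨-N, fun k hk => hN (-k) (by omega)⟩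
    (fun j => by rw [hstep (-j), sup_comm, neg_sub, neg_add_eq_sub]) (-j)
  rw [neg_neg] at this
  rw [this, ← neg_surjective.iSup_comp]
  exact iSup_congr fun k => iSup_congr_Prop (by omega) fun _ => by rw [neg_neg]

variable [IsModularLattice α] {F G : ℤ → α}

theorem iSupIndep_inf_of_isCompl (hF : Monotone F) (hG : Antitone G)
    (h : ∀ k, IsCompl (F k) (G (k + 1))) : iSupIndep fun k => F k ⊓ G k := by
  intro j
  have hle : ⨆ (k) (_ : k ≠ j), F k ⊓ G k ≤ F (j - 1) ⊔ G (j + 1) := iSup₂_le fun k hk => by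
    rcases hk.lt_or_gt with hlt | hgt
    · exact inf_le_left.trans ((hF (by omega)).trans le_sup_left)
    · exact inf_le_right.trans ((hG (by omega)).trans le_sup_right)
  refine (disjoint_inf_sup_of_le (hF (by omega)) ?_ (h j).disjoint).mono_right hle
  simpa using (h (j - 1)).disjoint

theorem isCompl_succ_iff_iSupIndep_inf [IsCompactlyGenerated α]
    (hF : Monotone F) (hG : Antitone G)
    (hFbot : ∃ N, ∀ k ≤ N, F k = ⊥) (hGbot : ∃ N, ∀ k ≥ N, G k = ⊥) :
    (∀ k, IsCompl (F k) (G (k + 1))) ↔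
      iSupIndep (fun k => F k ⊓ G k) ∧ ⨆ k, F k ⊓ G k = ⊤ ∧
        (∀ j, F j = ⨆ k ≤ j, F k ⊓ G k) ∧ ∀ j, G j = ⨆ k ≥ j, F k ⊓ G k := by
  constructor
  · intro h
    have hFj (j : ℤ) : F j = ⨆ k ≤ j, F k ⊓ G k :=
      eq_iSup_le_of_eq_pred_sup hF hFbot (fun j => by
        simpa [inf_comm] using ((h (j - 1)).sup_inf_eq_of_le (hF (by omega : j - 1 ≤ j))).symm) j
    have hGj (j : ℤ) : G j = ⨆ k ≥ j, F k ⊓ G k :=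
      eq_iSup_ge_of_eq_sup_succ hG hGbot (fun j => by
        simpa [sup_comm] using ((h j).symm.sup_inf_eq_of_le (hG (by omega : j ≤ j + 1))).symm) j
    refine ⟨iSupIndep_inf_of_isCompl hF hG h, ?_, hFj, hGj⟩
    rw [eq_top_iff, ← (h 0).sup_eq_top, hFj, hGj]
    exact sup_le (iSup₂_le_iSup _ _) (iSup₂_le_iSup _ _)
  · rintro ⟨hindep, htop, hFj, hGj⟩ k
    constructor
    · rw [hFj k, hGj (k + 1)]
      exact hindep.disjoint_biSup_biSup (s := Set.Iic k) (t := Set.Ici (k + 1))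
        (Set.disjoint_left.2 fun i hi hi' => by simp only [Set.mem_Iic, Set.mem_Ici] at hi hi'; omega)
    · rw [codisjoint_iff, eq_top_iff, ← htop]
      refine iSup_le fun i => ?_
      rcases le_or_gt i k with hi | hi
      · exact inf_le_left.trans ((hF hi).trans le_sup_left)
      · exact inf_le_right.trans ((hG (by omega : k + 1 ≤ i)).trans le_sup_right)

end Lattice

theorem opposite_filtrations_iff_general (K : Type*) [Field K] (E : Type*) [AddCommGroup E]
    [Module K E]
    (F G : ℤ → Submodule K E) (hF : Monotone F) (hG : Antitone G)
    (hFbot : ∃ N : ℤ, ∀ k ≤ N, F k = ⊥)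
    (hGbot : ∃ N : ℤ, ∀ k, N ≤ k → G k = ⊥) :
    (∀ k : ℤ, IsCompl (F k) (G (k + 1))) ↔
      (DirectSum.IsInternal (fun k : ℤ => F k ⊓ G k) ∧
        (∀ j : ℤ, F j = ⨆ k ≤ j, F k ⊓ G k) ∧
        (∀ j : ℤ, G j = ⨆ k ≥ j, F k ⊓ G k)) := by
  rw [DirectSum.isInternal_submodule_iff_iSupIndep_and_iSup_eq_top, and_assoc]
  exact isCompl_succ_iff_iSupIndep_inf hF hG hFbot hGbot

/-- Opposite filtrations: for a finite-dimensional vector space `E` with an exhaustive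
increasing filtration `F` and an exhaustive decreasing filtration `G`, the condition
`E = F_k ⊕ G^{k+1}` for all `k` is equivalent to `E` being the internal direct sum of
the subspaces `F_k ∩ G^k`, with `F_j = ⊕_{k ≤ j} (F_k ∩ G^k)` and
`G^j = ⊕_{k ≥ j} (F_k ∩ G^k)` for all `j`. -/
theorem opposite_filtrations_iff (K : Type*) [Field K] (E : Type*) [AddCommGroup E]
    [Module K E] [FiniteDimensional K E]
    (F G : ℤ → Submodule K E) (hF : Monotone F) (hG : Antitone G)
    (hFbot : ∃ N : ℤ, ∀ k ≤ N, F k = ⊥) (hFtop : ∃ N : ℤ, ∀ k, N ≤ k → F k = ⊤)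
    (hGtop : ∃ N : ℤ, ∀ k ≤ N, G k = ⊤) (hGbot : ∃ N : ℤ, ∀ k, N ≤ k → G k = ⊥) :
    (∀ k : ℤ, IsCompl (F k) (G (k + 1))) ↔
      (DirectSum.IsInternal (fun k : ℤ => F k ⊓ G k) ∧
        (∀ j : ℤ, F j = ⨆ k ≤ j, F k ⊓ G k) ∧
        (∀ j : ℤ, G j = ⨆ k ≥ j, F k ⊓ G k)) :=
  opposite_filtrations_iff_general K E F G hF hG hFbot hGbot
end

section
/- Let f ∈ ℂ[t] be a nonconstant polynomial. If a rational function φ ∈ ℂ(t) satisfies φ′ = f′ · φ, then φ = 0. -/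
/-!
Write `φ = n / d` in lowest terms. Clearing denominators, `φ' = f' φ` becomes
`W(d, n) = f' n d` for the Wronskian `W(d, n) = d n' - d' n`. If `n ≠ 0` this is impossible
by degrees: `deg W(d, n) < deg d + deg n ≤ deg (f' n d)`, because `f' ≠ 0`.
-/

open Polynomial

theorem Derivation.map_algebraMap_polynomial {R A : Type*} [CommSemiring R] [CommSemiring A]
    [Algebra R A] [Algebra R[X] A] [IsScalarTower R R[X] A] (D : Derivation R A A)
    (hD : D (algebraMap R[X] A X) = 1) (p : R[X]) :
    D (algebraMap R[X] A p) = algebraMap R[X] A (derivative p) := by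
  simpa [aeval_algebraMap_apply, hD] using D.comp_aeval_eq (algebraMap R[X] A X) p

namespace RatFunc

variable {K : Type*} [Field K]

theorem mul_algebraMap_denom (x : RatFunc K) :
    x * algebraMap K[X] (RatFunc K) x.denom = algebraMap K[X] (RatFunc K) x.num :=
  (div_eq_iff (algebraMap_ne_zero x.denom_ne_zero)).mp x.num_div_denom |>.symm

/-- The quotient rule `(n / d)' = W(d, n) / d²`, written without division. -/
theorem derivation_mul_algebraMap_denom_sq (D : Derivation K (RatFunc K) (RatFunc K))
    (hD : D X = 1) (x : RatFunc K) :
    D x * algebraMap K[X] (RatFunc K) x.denom ^ 2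
      = algebraMap K[X] (RatFunc K) (wronskian x.denom x.num) := by
  have hD' : D (algebraMap K[X] (RatFunc K) Polynomial.X) = 1 := by rw [algebraMap_X, hD]
  have h := congrArg D x.mul_algebraMap_denom
  rw [D.leibniz, D.map_algebraMap_polynomial hD', D.map_algebraMap_polynomial hD'] at h
  simp only [wronskian, map_sub, map_mul, ← h, ← x.mul_algebraMap_denom, smul_eq_mul]
  ring

end RatFunc

theorem Polynomial.wronskian_ne_mul_mul {R : Type*} [CommRing R] [NoZeroDivisors R]
    {g a b : R[X]} (hg : g ≠ 0) (ha : a ≠ 0) (hb : b ≠ 0) :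
    wronskian a b ≠ g * (a * b) := by
  intro h
  have hlt := degree_wronskian_lt_add ha hb
  rw [h, degree_mul, degree_mul] at hlt
  exact hlt.not_ge (le_add_of_nonneg_left (zero_le_degree_iff.mpr hg))

/-- Let `f ∈ ℂ[t]` be a nonconstant polynomial, and let `D` be the derivative on the
field `ℂ(t)` of rational functions (the unique `ℂ`-linear derivation with `D t = 1`).
If a rational function `φ` satisfies `φ' = f' · φ`, then `φ = 0`. -/
theorem rational_solution_of_twisted_equation_is_zero
    (f : Polynomial ℂ) (hf : f.natDegree ≠ 0)
    (D : Derivation ℂ (RatFunc ℂ) (RatFunc ℂ)) (hD : D RatFunc.X = 1)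
    (φ : RatFunc ℂ)
    (hφ : D φ = algebraMap (Polynomial ℂ) (RatFunc ℂ) (Polynomial.derivative f) * φ) :
    φ = 0 := by
  by_contra hφ0
  have hf' : derivative f ≠ 0 := mt derivative_eq_zero.mp hf
  have hnum : φ.num ≠ 0 := by rwa [ne_eq, RatFunc.num_eq_zero_iff]
  apply wronskian_ne_mul_mul hf' φ.denom_ne_zero hnum
  apply RatFunc.algebraMap_injective ℂ
  rw [← RatFunc.derivation_mul_algebraMap_denom_sq D hD, hφ, map_mul, map_mul,
    ← φ.mul_algebraMap_denom]
  ring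
end
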